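/- Let F be a field of characteristic 0 and let n ∈ ℕ. Two involutions g₁, g₂ ∈ Sp_{2n}(F) (i.e. g₁² = g₂² = 1) are conjugate by an element of Sp_{2n}(F) if and only if trace(g₁) = trace(g₂). -/

import Mathlib

/-!
An involution `g ∈ Sp(V, B)` is a `B`-isometry, so its eigenspaces `V₊` and `V₋` for `1` and `-1`,
which span `V` since `2 ≠ 0`, are `B`-orthogonal; hence `B` is nondegenerate on each of them. A
Darboux basis of `V₊` followed by one of `V₋` is a symplectic basis of `V` made of eigenvectors,
so `g` is `Sp`-conjugate to `diag(1_p, -1_q, 1_p, -1_q)`. The trace `2 (p - q) = 2 (2p - n)` of this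
matrix recovers `p` in characteristic zero.
-/

open Matrix Submodule

section SymplecticFamily

variable {F V : Type*} [Field F]

def symplecticAppend {p q : ℕ} (u : Fin p ⊕ Fin p → V) (w : Fin q ⊕ Fin q → V) :
    Fin (p + q) ⊕ Fin (p + q) → V :=
  Sum.elim (Fin.append (u ∘ Sum.inl) (w ∘ Sum.inl)) (Fin.append (u ∘ Sum.inr) (w ∘ Sum.inr))

theorem range_symplecticAppend {p q : ℕ} (u : Fin p ⊕ Fin p → V) (w : Fin q ⊕ Fin q → V) :
    Set.range (symplecticAppend u w) = Set.range u ∪ Set.range w := by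
  ext x
  constructor
  · rintro ⟨i | i, rfl⟩ <;> induction i using Fin.addCases <;> simp [symplecticAppend]
  · rintro (⟨i | i, rfl⟩ | ⟨i | i, rfl⟩)
    exacts [⟨.inl (Fin.castAdd q i), by simp [symplecticAppend]⟩,
      ⟨.inr (Fin.castAdd q i), by simp [symplecticAppend]⟩,
      ⟨.inl (Fin.natAdd p i), by simp [symplecticAppend]⟩,
      ⟨.inr (Fin.natAdd p i), by simp [symplecticAppend]⟩]

variable [AddCommGroup V] [Module F V] {B : V →ₗ[F] V →ₗ[F] F}

def IsSymplecticFamily (B : V →ₗ[F] V →ₗ[F] F) {κ : Type*} [DecidableEq κ] (v : κ ⊕ κ → V) :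
    Prop :=
  ∀ i j, B (v i) (v j) = J κ F i j

-- Mathlib's `J` is `fromBlocks 0 (-1) 1 0`, hence `B f e = 1` rather than `B e f = 1`.
theorem isSymplecticFamily_pair (hB : B.IsAlt) {e f : V} (hfe : B f e = 1) :
    IsSymplecticFamily B (Sum.elim (fun _ : Fin 1 => e) (fun _ => f)) := by
  rintro (i | i) (j | j) <;> simp [J, hB.self_eq_zero, hfe, ← hB.neg f e, Subsingleton.elim i j]

theorem IsSymplecticFamily.symplecticAppend {p q : ℕ} {u : Fin p ⊕ Fin p → V}
    {w : Fin q ⊕ Fin q → V} (hu : IsSymplecticFamily B u) (hw : IsSymplecticFamily B w)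
    (huw : ∀ i j, B (u i) (w j) = 0) (hwu : ∀ i j, B (w i) (u j) = 0) :
    IsSymplecticFamily B (symplecticAppend u w) := by
  rintro (i | i) (j | j) <;> induction i using Fin.addCases <;> induction j using Fin.addCases <;>
    simp [_root_.symplecticAppend, J, one_apply, hu _ _, hw _ _, huw, hwu, Fin.ext_iff] <;> omega

theorem IsSymplecticFamily.linearIndependent {κ : Type*} [Fintype κ] [DecidableEq κ]
    {v : κ ⊕ κ → V} (hv : IsSymplecticFamily B v) : LinearIndependent F v := by
  rw [Fintype.linearIndependent_iff]
  intro c hc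
  refine congrFun (eq_zero_of_vecMul_eq_zero (isUnit_det_J κ F).ne_zero (funext fun j => ?_))
  simpa [map_sum, hv _ j, vecMul, dotProduct] using congrArg (B · (v j)) hc

end SymplecticFamily

section Darboux

variable {F V : Type*} [Field F] [AddCommGroup V] [Module F V] {B : V →ₗ[F] V →ₗ[F] F}

theorem exists_mem_apply_eq_one {W : Submodule F V} (hW : Disjoint W (W.orthogonalBilin B))
    (hW₀ : W ≠ ⊥) : ∃ e ∈ W, ∃ f ∈ W, B f e = 1 := by
  obtain ⟨e, he, he₀⟩ := W.exists_mem_ne_zero_of_ne_bot hW₀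
  have : e ∉ W.orthogonalBilin B := fun h => he₀ (disjoint_def.mp hW e he h)
  simp only [mem_orthogonalBilin_iff, not_forall] at this
  obtain ⟨f, hf, hfe⟩ := this
  exact ⟨e, he, (B f e)⁻¹ • f, W.smul_mem _ hf, by simp [inv_mul_cancel₀ hfe]⟩

section Pair

variable (hB : B.IsAlt) {e f : V} (hfe : B f e = 1)
include hB hfe

-- The `B`-orthogonal projection of `w` onto the complement of `span {e, f}`.
theorem sub_smul_add_smul_mem_inf_ker {W : Submodule F V} (he : e ∈ W) (hf : f ∈ W) {w : V}
    (hw : w ∈ W) :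
    w - B f w • e + B e w • f ∈ W ⊓ (LinearMap.ker (B e) ⊓ LinearMap.ker (B f)) :=
  ⟨W.add_mem (W.sub_mem hw (W.smul_mem _ he)) (W.smul_mem _ hf),
    by simp [hB.self_eq_zero, hfe, ← hB.neg f e]⟩

theorem span_sup_inf_ker_eq {W : Submodule F V} (he : e ∈ W) (hf : f ∈ W) :
    span F {e, f} ⊔ W ⊓ (LinearMap.ker (B e) ⊓ LinearMap.ker (B f)) = W := by
  refine le_antisymm (sup_le (span_le.mpr (Set.pair_subset he hf)) inf_le_left) fun w hw => ?_
  rw [show w = (B f w • e - B e w • f) + (w - B f w • e + B e w • f) by abel]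
  exact add_mem_sup (sub_mem (smul_mem _ _ (subset_span (by simp)))
    (smul_mem _ _ (subset_span (by simp)))) (sub_smul_add_smul_mem_inf_ker hB hfe he hf hw)

theorem disjoint_inf_ker_orthogonalBilin {W : Submodule F V}
    (hW : Disjoint W (W.orthogonalBilin B)) (he : e ∈ W) (hf : f ∈ W) :
    Disjoint (W ⊓ (LinearMap.ker (B e) ⊓ LinearMap.ker (B f)))
      ((W ⊓ (LinearMap.ker (B e) ⊓ LinearMap.ker (B f))).orthogonalBilin B) := by
  rw [disjoint_def]
  intro w hw hw'
  obtain ⟨hwW, hwe, hwf⟩ : w ∈ W ∧ B e w = 0 ∧ B f w = 0 := by simpa using hw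
  refine disjoint_def.mp hW w hwW (mem_orthogonalBilin_iff.mpr fun y hy => ?_)
  have := mem_orthogonalBilin_iff.mp hw' _ (sub_smul_add_smul_mem_inf_ker hB hfe he hf hy)
  simpa [hwe, hwf] using this

end Pair

theorem exists_isSymplecticFamily_span_eq [FiniteDimensional F V] (hB : B.IsAlt)
    (W : Submodule F V) (hW : Disjoint W (W.orthogonalBilin B)) :
    ∃ m, ∃ v : Fin m ⊕ Fin m → V, IsSymplecticFamily B v ∧ span F (Set.range v) = W := by
  induction W using WellFoundedLT.induction with | _ W ih
  rcases eq_or_ne W ⊥ with rfl | hW₀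
  · exact ⟨0, isEmptyElim, isEmptyElim, by simp⟩
  obtain ⟨e, he, f, hf, hfe⟩ := exists_mem_apply_eq_one hW hW₀
  set W' := W ⊓ (LinearMap.ker (B e) ⊓ LinearMap.ker (B f))
  have hW' : W' < W := lt_of_le_of_ne inf_le_left fun h => by
    have : e ∈ W' := h ▸ he
    simp [W', hfe] at this
  obtain ⟨m, v, hv, hspan⟩ :=
    ih W' hW' (disjoint_inf_ker_orthogonalBilin hB hfe hW he hf)
  have hvW' : ∀ j, v j ∈ W' := fun j => hspan ▸ subset_span (Set.mem_range_self j)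
  have horth : ∀ i j, B (Sum.elim (fun _ : Fin 1 => e) (fun _ : Fin 1 => f) i) (v j) = 0 := by
    rintro (_ | _) j
    exacts [(hvW' j).2.1, (hvW' j).2.2]
  refine ⟨1 + m, symplecticAppend _ v, (isSymplecticFamily_pair hB hfe).symplecticAppend hv
    horth fun j i => hB.eq_iff.mp (horth i j), ?_⟩
  rw [range_symplecticAppend, span_union, hspan, Set.Sum.elim_range, Set.range_const,
    Set.range_const, Set.singleton_union]
  exact span_sup_inf_ker_eq hB hfe he hf

end Darboux

def stdSign (F : Type*) [Field F] {n : ℕ} (p : ℕ) (a : Fin n) : F :=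
  if (a : ℕ) < p then 1 else -1

section Involution

variable {F V : Type*} [Field F] [AddCommGroup V] [Module F V] {B : V →ₗ[F] V →ₗ[F] F}
  {g : Module.End F V}

open Module.End

theorem apply_eq_zero_of_mem_eigenspace (hg : ∀ x y, B (g x) (g y) = B x y) {μ ν : F}
    (hμν : μ * ν ≠ 1) {x y : V} (hx : x ∈ eigenspace g μ) (hy : y ∈ eigenspace g ν) :
    B x y = 0 := by
  have h := hg x y
  rw [mem_eigenspace_iff.mp hx, mem_eigenspace_iff.mp hy] at h
  simp only [map_smul, LinearMap.smul_apply, smul_eq_mul] at h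
  have : (1 - μ * ν) * B x y = 0 := by linear_combination -h
  exact (mul_eq_zero.mp this).resolve_left (sub_ne_zero.mpr hμν.symm)

theorem eigenspace_one_sup_eigenspace_neg_one [NeZero (2 : F)] (hg : Function.Involutive g) :
    eigenspace g 1 ⊔ eigenspace g (-1) = ⊤ := by
  refine eq_top_iff.mpr fun x _ => Submodule.mem_sup.mpr
    ⟨(2 : F)⁻¹ • (x + g x), ?_, (2 : F)⁻¹ • (x - g x), ?_, ?_⟩
  · simp [hg x, add_comm]
  · simp [hg x, ← smul_neg]
  · rw [← smul_add, add_add_sub_cancel, ← two_smul F, smul_smul, inv_mul_cancel₀ two_ne_zero,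
      one_smul]

theorem disjoint_orthogonalBilin_of_sup_eq_top (hB : B.SeparatingRight)
    {W₁ W₂ : Submodule F V} (hW : W₁ ⊔ W₂ = ⊤) (h : ∀ x ∈ W₂, ∀ y ∈ W₁, B x y = 0) :
    Disjoint W₁ (W₁.orthogonalBilin B) := by
  refine Submodule.disjoint_def.mpr fun w hw hw' => hB w fun x => ?_
  obtain ⟨y, hy, z, hz, rfl⟩ := Submodule.mem_sup.mp (hW ▸ Submodule.mem_top : x ∈ W₁ ⊔ W₂)
  rw [map_add, LinearMap.add_apply, Submodule.mem_orthogonalBilin_iff.mp hw' y hy, h z hz w hw,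
    add_zero]

theorem exists_isSymplecticFamily_eigenbasis [FiniteDimensional F V] [NeZero (2 : F)]
    (hB : B.IsAlt) (hB' : B.SeparatingRight) (hg : ∀ x y, B (g x) (g y) = B x y)
    (hg₂ : Function.Involutive g) :
    ∃ p q, ∃ c : Fin (p + q) ⊕ Fin (p + q) → V, IsSymplecticFamily B c ∧
      Submodule.span F (Set.range c) = ⊤ ∧
      ∀ i, g (c i) = Sum.elim (stdSign F p) (stdSign F p) i • c i := by
  have hne : (-1 : F) ≠ 1 := fun h => (two_ne_zero : (2 : F) ≠ 0) (by linear_combination -h)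
  have hsup := eigenspace_one_sup_eigenspace_neg_one hg₂
  have horth₁ : ∀ x ∈ eigenspace g 1, ∀ y ∈ eigenspace g (-1), B x y = 0 :=
    fun x hx y hy => apply_eq_zero_of_mem_eigenspace hg (by simpa using hne) hx hy
  have horth₂ : ∀ x ∈ eigenspace g (-1), ∀ y ∈ eigenspace g 1, B x y = 0 :=
    fun x hx y hy => apply_eq_zero_of_mem_eigenspace hg (by simpa using hne) hx hy
  obtain ⟨p, u, hu, hspan_u⟩ := exists_isSymplecticFamily_span_eq hB _
    (disjoint_orthogonalBilin_of_sup_eq_top hB' hsup horth₂)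
  obtain ⟨q, w, hw, hspan_w⟩ := exists_isSymplecticFamily_span_eq hB _
    (disjoint_orthogonalBilin_of_sup_eq_top hB' ((sup_comm _ _).trans hsup) horth₁)
  have huE (i) : u i ∈ eigenspace g 1 := hspan_u ▸ Submodule.subset_span (Set.mem_range_self i)
  have hwE (i) : w i ∈ eigenspace g (-1) :=
    hspan_w ▸ Submodule.subset_span (Set.mem_range_self i)
  refine ⟨p, q, symplecticAppend u w, hu.symplecticAppend hw
    (fun i j => horth₁ _ (huE i) _ (hwE j)) (fun i j => horth₂ _ (hwE i) _ (huE j)), ?_, ?_⟩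
  · rw [range_symplecticAppend, Submodule.span_union, hspan_u, hspan_w, hsup]
  · rintro (i | i) <;> induction i using Fin.addCases <;>
      simp [symplecticAppend, stdSign, mem_eigenspace_iff.mp (huE _),
        mem_eigenspace_iff.mp (hwE _)]

end Involution

section SymplecticMatrix

variable {F : Type*} [Field F] {l : Type*} [Fintype l] [DecidableEq l]

theorem isAlt_toBilin'_J : (toBilin' (J l F)).IsAlt := by
  intro x
  simp [toBilin'_apply', J, dotProduct, mulVec, fromBlocks, Fintype.sum_sum_type, one_apply,
    mul_comm]

theorem separatingRight_toBilin'_J : (toBilin' (J l F)).SeparatingRight :=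
  separatingRight_toBilin'_iff.mpr (nondegenerate_of_det_ne_zero (isUnit_det_J l F).ne_zero).2

theorem toBilin'_J_mulVec_mulVec {g : Matrix (l ⊕ l) (l ⊕ l) F}
    (hg : g ∈ symplecticGroup l F) (x y : l ⊕ l → F) :
    toBilin' (J l F) (g *ᵥ x) (g *ᵥ y) = toBilin' (J l F) x y := by
  rw [← toLin'_apply, ← toLin'_apply, ← LinearMap.BilinForm.comp_apply, toBilin'_comp,
    SymplecticGroup.mem_iff'.mp hg]

theorem IsSymplecticFamily.transpose_of_mem_symplecticGroup {v : l ⊕ l → l ⊕ l → F}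
    (hv : IsSymplecticFamily (toBilin' (J l F)) v) : (of v)ᵀ ∈ symplecticGroup l F := by
  rw [SymplecticGroup.mem_iff']
  ext i j
  rw [mul_mul_apply, ← hv i j, toBilin'_apply']
  rfl

theorem mul_transpose_of_mulVec_eq_smul {ι : Type*} [Fintype ι] [DecidableEq ι]
    {g : Matrix ι ι F} {v : ι → ι → F} {d : ι → F} (h : ∀ j, g *ᵥ v j = d j • v j) :
    g * (of v)ᵀ = (of v)ᵀ * diagonal d := by
  ext i j
  rw [mul_diagonal, mul_comm]
  simpa [mul_apply, mulVec, dotProduct] using congrFun (h j) i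

end SymplecticMatrix

def stdInvolution (F : Type*) [Field F] (n p : ℕ) : Matrix (Fin n ⊕ Fin n) (Fin n ⊕ Fin n) F :=
  diagonal (Sum.elim (stdSign F p) (stdSign F p))

theorem trace_stdInvolution {F : Type*} [Field F] {n p : ℕ} (h : p ≤ n) :
    (stdInvolution F n p).trace = 2 * (2 * p - n) := by
  obtain ⟨q, rfl⟩ := Nat.exists_eq_add_of_le h
  simp only [stdInvolution, trace_diagonal, Fintype.sum_sum_type, Sum.elim_inl, Sum.elim_inr,
    stdSign, Fin.sum_univ_add, Fin.val_castAdd, Fin.is_lt, ↓reduceIte, Fin.val_natAdd,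
    add_lt_iff_neg_left, not_lt_zero, Finset.sum_const, Finset.card_univ, Fintype.card_fin,
    nsmul_eq_mul, mul_one, Nat.cast_add]
  ring

theorem nonsing_inv_mem_symplecticGroup {F : Type*} [Field F] {l : Type*} [Fintype l]
    [DecidableEq l] {P : Matrix (l ⊕ l) (l ⊕ l) F} (hP : P ∈ symplecticGroup l F) :
    P⁻¹ ∈ symplecticGroup l F := by
  rw [SymplecticGroup.inv_eq_symplectic_inv _ hP]
  exact mul_mem (mul_mem (SymplecticGroup.neg_mem (SymplecticGroup.J_mem _ _))
    (SymplecticGroup.transpose_mem hP)) (SymplecticGroup.J_mem _ _)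

theorem exists_eq_conj_stdInvolution {F : Type*} [Field F] [NeZero (2 : F)] {n : ℕ}
    {g : Matrix (Fin n ⊕ Fin n) (Fin n ⊕ Fin n) F} (hg : g ∈ symplecticGroup (Fin n) F)
    (hg₂ : g ^ 2 = 1) :
    ∃ p ≤ n, ∃ P ∈ symplecticGroup (Fin n) F, g = P * stdInvolution F n p * P⁻¹ := by
  obtain ⟨p, q, c, hc, hspan, hgc⟩ := exists_isSymplecticFamily_eigenbasis (g := toLin' g)
    isAlt_toBilin'_J separatingRight_toBilin'_J (toBilin'_J_mulVec_mulVec hg)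
    fun x => by
      rw [toLin'_apply, toLin'_apply, mulVec_mulVec, ← sq, hg₂, one_mulVec]
  have hn : p + q = n := by
    have := finrank_span_eq_card hc.linearIndependent
    rw [hspan, finrank_top, Module.finrank_fintype_fun_eq_card] at this
    simp only [Fintype.card_sum, Fintype.card_fin] at this
    omega
  subst hn
  have hP := hc.transpose_of_mem_symplecticGroup
  refine ⟨p, Nat.le_add_right p q, _, hP, ?_⟩
  rw [stdInvolution, ← mul_transpose_of_mulVec_eq_smul hgc, mul_nonsing_inv_cancel_right _ _
    (SymplecticGroup.symplectic_det hP)]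

/-- Over a field of characteristic zero, two involutions of `Sp_{2n}(F)` are conjugate
by an element of `Sp_{2n}(F)` if and only if they have the same trace. -/
theorem involutions_Sp_conjugate_iff_trace_eq
    (F : Type*) [Field F] [CharZero F] (n : ℕ)
    (g₁ g₂ : Matrix (Fin n ⊕ Fin n) (Fin n ⊕ Fin n) F)
    (hg₁ : g₁ ∈ Matrix.symplecticGroup (Fin n) F)
    (hg₂ : g₂ ∈ Matrix.symplecticGroup (Fin n) F)
    (h₁ : g₁ ^ 2 = 1) (h₂ : g₂ ^ 2 = 1) :
    (∃ s ∈ Matrix.symplecticGroup (Fin n) F, s * g₁ * s⁻¹ = g₂) ↔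
      g₁.trace = g₂.trace := by
  constructor
  · rintro ⟨s, hs, rfl⟩
    exact (trace_conj ((isUnit_iff_isUnit_det s).mpr (SymplecticGroup.symplectic_det hs)) g₁).symm
  · intro htr
    obtain ⟨p₁, hp₁, P₁, hP₁, rfl⟩ := exists_eq_conj_stdInvolution hg₁ h₁
    obtain ⟨p₂, hp₂, P₂, hP₂, rfl⟩ := exists_eq_conj_stdInvolution hg₂ h₂
    have hu₁ := SymplecticGroup.symplectic_det hP₁
    have hu₂ := SymplecticGroup.symplectic_det hP₂
    obtain rfl : p₁ = p₂ := by
      rw [trace_conj ((isUnit_iff_isUnit_det _).mpr hu₁),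
        trace_conj ((isUnit_iff_isUnit_det _).mpr hu₂), trace_stdInvolution hp₁,
        trace_stdInvolution hp₂] at htr
      exact_mod_cast (by linear_combination htr / 4 : (p₁ : F) = p₂)
    refine ⟨P₂ * P₁⁻¹, mul_mem hP₂ (nonsing_inv_mem_symplecticGroup hP₁), ?_⟩
    simp [Matrix.mul_assoc, Matrix.mul_inv_rev, nonsing_inv_nonsing_inv _ hu₁,
      nonsing_inv_mul_cancel_left _ _ hu₁]
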